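/- arXiv:1806.07758 — 5 statements merged into one kernel-verified Lean document; each statement's English description precedes it below -/
import Mathlib

section
/- Let f: ℝ → ℝ be C¹ with f' strictly increasing (f strictly convex), f'(0) = 0, and fix M > 0. Define D(s) = inf{ |(f'(v)-f'(u))/(v-u)| : |u|,|v| ≤ M, uv ≥ 0, |v-u| ≥ s } and D̂(s) = inf{ |(f'(v)-f'(u))/(v-u)| : |u|,|v| ≤ M, |v-u| ≥ s }. Then for all s > 0, D̂(s) ≥ (1/2)·D(s/2). -/
open Set ENNReal

lemma key_slope (f : ℝ → ℝ) (hconv : StrictMono (deriv f)) (h0 : deriv f 0 = 0)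
    (a b : ℝ) (hab : a < 0) (hb0 : 0 < b) :
    ∃ w : ℝ, (|w| ≤ |a| ∨ |w| ≤ |b|) ∧ (b - a) / 2 ≤ |w| ∧
      |(deriv f w - deriv f 0) / (w - 0)| ≤ 2 * |(deriv f b - deriv f a) / (b - a)| := by
  have hfa : deriv f a < 0 := h0 ▸ hconv hab
  have hfb : 0 < deriv f b := h0 ▸ hconv hb0
  have hba : 0 < b - a := by linarith
  have hslope : 0 < (deriv f b - deriv f a) / (b - a) := div_pos (by linarith) hba
  rcases le_or_gt ((b - a) / 2) b with hcase | hcase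
  · refine ⟨b, Or.inr le_rfl, by rwa [abs_of_pos hb0], ?_⟩
    rw [h0, sub_zero, sub_zero, abs_of_pos (div_pos hfb hb0), abs_of_pos hslope,
      ← mul_div_assoc, div_le_div_iff₀ hb0 hba]
    nlinarith
  · have hcase' : (b - a) / 2 ≤ -a := by linarith
    refine ⟨a, Or.inl le_rfl, by rwa [abs_of_neg hab], ?_⟩
    rw [h0, sub_zero, sub_zero]
    have h1 : deriv f a / a = (-deriv f a) / (-a) := by rw [neg_div_neg_eq]
    have hda : 0 < deriv f a / a := by rw [h1]; exact div_pos (by linarith) (by linarith)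
    rw [abs_of_pos hda, abs_of_pos hslope, h1, ← mul_div_assoc,
      div_le_div_iff₀ (by linarith : (0:ℝ) < -a) hba]
    nlinarith

theorem stmt_3 (f : ℝ → ℝ) (hf : ContDiff ℝ 1 f)
    (hconv : StrictMono (deriv f)) (h0 : deriv f 0 = 0)
    (M : ℝ) (hM : 0 < M)
    (D Dhat : ℝ → ℝ≥0∞)
    (hD : ∀ s : ℝ, D s = sInf { r : ℝ≥0∞ | ∃ u v : ℝ, |u| ≤ M ∧ |v| ≤ M ∧
      0 ≤ u * v ∧ s ≤ |v - u| ∧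
      r = ENNReal.ofReal |(deriv f v - deriv f u) / (v - u)| })
    (hDhat : ∀ s : ℝ, Dhat s = sInf { r : ℝ≥0∞ | ∃ u v : ℝ, |u| ≤ M ∧ |v| ≤ M ∧
      s ≤ |v - u| ∧
      r = ENNReal.ofReal |(deriv f v - deriv f u) / (v - u)| }) :
    ∀ s : ℝ, 0 < s → 2⁻¹ * D (s / 2) ≤ Dhat s := by
  intro s hs
  rw [hDhat]
  refine le_sInf ?_
  rintro r ⟨u, v, hu, hv, hsv, rfl⟩
  rcases le_or_gt 0 (u * v) with hpos | hneg
  · have hD2 : D (s / 2) ≤ ENNReal.ofReal |(deriv f v - deriv f u) / (v - u)| := by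
      rw [hD]
      exact sInf_le ⟨u, v, hu, hv, hpos, le_trans (by linarith) hsv, rfl⟩
    calc 2⁻¹ * D (s / 2) ≤ 1 * ENNReal.ofReal |(deriv f v - deriv f u) / (v - u)| :=
          mul_le_mul' (ENNReal.inv_le_one.mpr one_le_two) hD2
      _ = _ := one_mul _
  · obtain ⟨a, b, hab, hb0, haM, hbM, hsab, heq⟩ : ∃ a b : ℝ, a < 0 ∧ 0 < b ∧ |a| ≤ M ∧
        |b| ≤ M ∧ s ≤ b - a ∧
        |(deriv f v - deriv f u) / (v - u)| = |(deriv f b - deriv f a) / (b - a)| := by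
      rcases mul_neg_iff.mp hneg with ⟨h1, h2⟩ | ⟨h1, h2⟩
      · refine ⟨v, u, h2, h1, hv, hu, ?_, ?_⟩
        · have : |v - u| = u - v := by rw [abs_of_neg (by linarith)]; ring
          linarith
        · congr 1
          rw [show (deriv f u - deriv f v) / (u - v)
              = (deriv f v - deriv f u) / (v - u) by
            rw [← neg_sub (deriv f v), ← neg_sub v u, neg_div_neg_eq]]
      · refine ⟨u, v, h1, h2, hu, hv, ?_, rfl⟩
        have : |v - u| = v - u := abs_of_pos (by linarith)
        linarith
    obtain ⟨w, hwM, hw2, hwle⟩ := key_slope f hconv h0 a b hab hb0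
    have hwM' : |w| ≤ M := by rcases hwM with h | h <;> linarith
    have hD2 : D (s / 2) ≤ ENNReal.ofReal |(deriv f w - deriv f 0) / (w - 0)| := by
      rw [hD]
      refine sInf_le ⟨0, w, by simpa using hM.le, hwM', by simp, ?_, rfl⟩
      rw [sub_zero]
      linarith
    have h2r : ENNReal.ofReal |(deriv f w - deriv f 0) / (w - 0)|
        ≤ 2 * ENNReal.ofReal |(deriv f v - deriv f u) / (v - u)| := by
      rw [heq, show (2 : ℝ≥0∞) = ENNReal.ofReal 2 by simp,
        ← ENNReal.ofReal_mul (by norm_num)]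
      exact ENNReal.ofReal_le_ofReal hwle
    calc 2⁻¹ * D (s / 2)
        ≤ 2⁻¹ * (2 * ENNReal.ofReal |(deriv f v - deriv f u) / (v - u)|) :=
          mul_le_mul_right (hD2.trans h2r) _
      _ = ENNReal.ofReal |(deriv f v - deriv f u) / (v - u)| := by
          rw [← mul_assoc, ENNReal.inv_mul_cancel (by norm_num) (by norm_num), one_mul]
end

section
/- Let f: ℝ → ℝ be C¹ with f' strictly increasing and f'(0) = 0, and let M > 0. Define Δ(s) = s·D(s) and Δ̂(s) = s·D̂(s), where D and D̂ are the infima of the difference quotients |(f'(v)-f'(u))/(v-u)| over pairs with |u|,|v| ≤ M, |v-u| ≥ s, with the additional restriction uv ≥ 0 in the case of D. Then for all s > 0: Δ(s/2) ≤ Δ̂(s) ≤ Δ(s). -/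
open Set ENNReal

private lemma quot_bound (f : ℝ → ℝ) (hconv : StrictMono (deriv f)) (h0 : deriv f 0 = 0)
    {u v : ℝ} (hu : u < 0) (hv : 0 < v) (huv : -u ≤ v) {s : ℝ} (hs : 0 < s) :
    s / 2 * |(deriv f v - deriv f 0) / (v - 0)| ≤ s * |(deriv f v - deriv f u) / (v - u)| := by
  have hfv : 0 < deriv f v := by rw [← h0]; exact hconv hv
  have hfu : deriv f u < 0 := by rw [← h0]; exact hconv hu
  have hvu : 0 < v - u := by linarith
  have h1 : (0:ℝ) ≤ (deriv f v - deriv f 0) / (v - 0) := by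
    apply div_nonneg <;> [linarith; linarith]
  have h2 : (0:ℝ) ≤ (deriv f v - deriv f u) / (v - u) := by
    apply div_nonneg <;> linarith
  rw [abs_of_nonneg h1, abs_of_nonneg h2, h0, sub_zero, sub_zero]
  have key : deriv f v / (2 * v) ≤ (deriv f v - deriv f u) / (v - u) :=
    div_le_div₀ (by linarith) (by linarith) hvu (by linarith)
  calc s / 2 * (deriv f v / v) = s * (deriv f v / (2 * v)) := by ring
    _ ≤ s * ((deriv f v - deriv f u) / (v - u)) := mul_le_mul_of_nonneg_left key hs.le

private lemma quot_bound' (f : ℝ → ℝ) (hconv : StrictMono (deriv f)) (h0 : deriv f 0 = 0)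
    {u v : ℝ} (hu : u < 0) (hv : 0 < v) (huv : v ≤ -u) {s : ℝ} (hs : 0 < s) :
    s / 2 * |(deriv f 0 - deriv f u) / (0 - u)| ≤ s * |(deriv f v - deriv f u) / (v - u)| := by
  have hfv : 0 < deriv f v := by rw [← h0]; exact hconv hv
  have hfu : deriv f u < 0 := by rw [← h0]; exact hconv hu
  have hvu : 0 < v - u := by linarith
  have hu' : 0 < 0 - u := by linarith
  have h1 : (0:ℝ) ≤ (deriv f 0 - deriv f u) / (0 - u) := by
    apply div_nonneg <;> linarith
  have h2 : (0:ℝ) ≤ (deriv f v - deriv f u) / (v - u) := by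
    apply div_nonneg <;> linarith
  rw [abs_of_nonneg h1, abs_of_nonneg h2, h0]
  have key : (0 - deriv f u) / (2 * (0 - u)) ≤ (deriv f v - deriv f u) / (v - u) :=
    div_le_div₀ (by linarith) (by linarith) hvu (by linarith)
  calc s / 2 * ((0 - deriv f u) / (0 - u)) = s * ((0 - deriv f u) / (2 * (0 - u))) := by ring
    _ ≤ s * ((deriv f v - deriv f u) / (v - u)) := mul_le_mul_of_nonneg_left key hs.le

theorem stmt_4 (f : ℝ → ℝ) (hf : ContDiff ℝ 1 f)
    (hconv : StrictMono (deriv f)) (h0 : deriv f 0 = 0)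
    (M : ℝ) (hM : 0 < M)
    (D Dhat Δ Δhat : ℝ → ℝ≥0∞)
    (hD : ∀ s : ℝ, D s = sInf { r : ℝ≥0∞ | ∃ u v : ℝ, |u| ≤ M ∧ |v| ≤ M ∧
      0 ≤ u * v ∧ s ≤ |v - u| ∧
      r = ENNReal.ofReal |(deriv f v - deriv f u) / (v - u)| })
    (hDhat : ∀ s : ℝ, Dhat s = sInf { r : ℝ≥0∞ | ∃ u v : ℝ, |u| ≤ M ∧ |v| ≤ M ∧
      s ≤ |v - u| ∧
      r = ENNReal.ofReal |(deriv f v - deriv f u) / (v - u)| })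
    (hΔ : ∀ s : ℝ, Δ s = ENNReal.ofReal s * D s)
    (hΔhat : ∀ s : ℝ, Δhat s = ENNReal.ofReal s * Dhat s) :
    ∀ s : ℝ, 0 < s → Δ (s / 2) ≤ Δhat s ∧ Δhat s ≤ Δ s := by
  intro s hs
  constructor
  · -- Δ (s/2) ≤ Δhat s
    rw [hΔ, hΔhat, hDhat]
    -- main claim: for each element of the Dhat set, bound holds
    have claim : ∀ r ∈ { r : ℝ≥0∞ | ∃ u v : ℝ, |u| ≤ M ∧ |v| ≤ M ∧
        s ≤ |v - u| ∧ r = ENNReal.ofReal |(deriv f v - deriv f u) / (v - u)| },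
        ENNReal.ofReal (s / 2) * D (s / 2) ≤ ENNReal.ofReal s * r := by
      rintro r ⟨u, v, huM, hvM, hsuv, rfl⟩
      rcases le_or_gt 0 (u * v) with hpos | hneg
      · -- same pair works for D (s/2)
        have hmem : ENNReal.ofReal |(deriv f v - deriv f u) / (v - u)| ∈
            { r : ℝ≥0∞ | ∃ u v : ℝ, |u| ≤ M ∧ |v| ≤ M ∧ 0 ≤ u * v ∧ s / 2 ≤ |v - u| ∧
              r = ENNReal.ofReal |(deriv f v - deriv f u) / (v - u)| } :=
          ⟨u, v, huM, hvM, hpos, by linarith, rfl⟩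
        have := (hD (s / 2)) ▸ sInf_le hmem
        exact mul_le_mul' (ENNReal.ofReal_le_ofReal (by linarith)) this
      · -- opposite signs
        rcases mul_neg_iff.1 hneg with ⟨hu, hv⟩ | ⟨hu, hv⟩
        · -- 0 < u, v < 0 : swap roles
          have hswap : |(deriv f v - deriv f u) / (v - u)| =
              |(deriv f u - deriv f v) / (u - v)| := by
            rw [show (deriv f u - deriv f v) / (u - v)
              = -(deriv f v - deriv f u) / -(v - u) by ring_nf, neg_div_neg_eq]
          have habs : |v - u| = u - v := by rw [abs_sub_comm]; exact abs_of_pos (by linarith)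
          rw [habs] at hsuv
          rw [hswap]
          -- now v < 0 < u, with s ≤ u - v
          rcases le_or_gt (-v) u with hc | hc
          · have hmem : ENNReal.ofReal |(deriv f u - deriv f 0) / (u - 0)| ∈
                { r : ℝ≥0∞ | ∃ a b : ℝ, |a| ≤ M ∧ |b| ≤ M ∧ 0 ≤ a * b ∧ s / 2 ≤ |b - a| ∧
                  r = ENNReal.ofReal |(deriv f b - deriv f a) / (b - a)| } := by
              refine ⟨0, u, by simp [hM.le], huM, by simp, ?_, rfl⟩
              rw [sub_zero, abs_of_pos hu]; linarith
            have hle := (hD (s / 2)) ▸ sInf_le hmem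
            calc ENNReal.ofReal (s / 2) * D (s / 2)
                ≤ ENNReal.ofReal (s / 2) *
                  ENNReal.ofReal |(deriv f u - deriv f 0) / (u - 0)| := mul_le_mul_right hle _
              _ ≤ ENNReal.ofReal s * ENNReal.ofReal |(deriv f u - deriv f v) / (u - v)| := by
                  rw [← ENNReal.ofReal_mul (by linarith), ← ENNReal.ofReal_mul hs.le]
                  exact ENNReal.ofReal_le_ofReal
                    (quot_bound f hconv h0 hv hu hc hs)
          · have hmem : ENNReal.ofReal |(deriv f 0 - deriv f v) / (0 - v)| ∈
                { r : ℝ≥0∞ | ∃ a b : ℝ, |a| ≤ M ∧ |b| ≤ M ∧ 0 ≤ a * b ∧ s / 2 ≤ |b - a| ∧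
                  r = ENNReal.ofReal |(deriv f b - deriv f a) / (b - a)| } := by
              refine ⟨v, 0, hvM, by simp [hM.le], by simp, ?_, rfl⟩
              rw [zero_sub, abs_of_pos (by linarith : (0:ℝ) < -v)]; linarith
            have hle := (hD (s / 2)) ▸ sInf_le hmem
            calc ENNReal.ofReal (s / 2) * D (s / 2)
                ≤ ENNReal.ofReal (s / 2) *
                  ENNReal.ofReal |(deriv f 0 - deriv f v) / (0 - v)| := mul_le_mul_right hle _
              _ ≤ ENNReal.ofReal s * ENNReal.ofReal |(deriv f u - deriv f v) / (u - v)| := by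
                  rw [← ENNReal.ofReal_mul (by linarith), ← ENNReal.ofReal_mul hs.le]
                  exact ENNReal.ofReal_le_ofReal
                    (quot_bound' f hconv h0 hv hu hc.le hs)
        · -- u < 0 < v
          have habs : |v - u| = v - u := abs_of_pos (by linarith)
          rw [habs] at hsuv
          rcases le_or_gt (-u) v with hc | hc
          · have hmem : ENNReal.ofReal |(deriv f v - deriv f 0) / (v - 0)| ∈
                { r : ℝ≥0∞ | ∃ a b : ℝ, |a| ≤ M ∧ |b| ≤ M ∧ 0 ≤ a * b ∧ s / 2 ≤ |b - a| ∧
                  r = ENNReal.ofReal |(deriv f b - deriv f a) / (b - a)| } := by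
              refine ⟨0, v, by simp [hM.le], hvM, by simp, ?_, rfl⟩
              rw [sub_zero, abs_of_pos hv]; linarith
            have hle := (hD (s / 2)) ▸ sInf_le hmem
            calc ENNReal.ofReal (s / 2) * D (s / 2)
                ≤ ENNReal.ofReal (s / 2) *
                  ENNReal.ofReal |(deriv f v - deriv f 0) / (v - 0)| := mul_le_mul_right hle _
              _ ≤ ENNReal.ofReal s * ENNReal.ofReal |(deriv f v - deriv f u) / (v - u)| := by
                  rw [← ENNReal.ofReal_mul (by linarith), ← ENNReal.ofReal_mul hs.le]
                  exact ENNReal.ofReal_le_ofReal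
                    (quot_bound f hconv h0 hu hv hc hs)
          · have hmem : ENNReal.ofReal |(deriv f 0 - deriv f u) / (0 - u)| ∈
                { r : ℝ≥0∞ | ∃ a b : ℝ, |a| ≤ M ∧ |b| ≤ M ∧ 0 ≤ a * b ∧ s / 2 ≤ |b - a| ∧
                  r = ENNReal.ofReal |(deriv f b - deriv f a) / (b - a)| } := by
              refine ⟨u, 0, huM, by simp [hM.le], by simp, ?_, rfl⟩
              rw [zero_sub, abs_of_pos (by linarith : (0:ℝ) < -u)]; linarith
            have hle := (hD (s / 2)) ▸ sInf_le hmem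
            calc ENNReal.ofReal (s / 2) * D (s / 2)
                ≤ ENNReal.ofReal (s / 2) *
                  ENNReal.ofReal |(deriv f 0 - deriv f u) / (0 - u)| := mul_le_mul_right hle _
              _ ≤ ENNReal.ofReal s * ENNReal.ofReal |(deriv f v - deriv f u) / (v - u)| := by
                  rw [← ENNReal.ofReal_mul (by linarith), ← ENNReal.ofReal_mul hs.le]
                  exact ENNReal.ofReal_le_ofReal
                    (quot_bound' f hconv h0 hu hv hc.le hs)
    set S := { r : ℝ≥0∞ | ∃ u v : ℝ, |u| ≤ M ∧ |v| ≤ M ∧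
        s ≤ |v - u| ∧ r = ENNReal.ofReal |(deriv f v - deriv f u) / (v - u)| }
    have hdistrib : ENNReal.ofReal s * sInf S = ⨅ r : S, ENNReal.ofReal s * (r : ℝ≥0∞) := by
      rw [sInf_eq_iInf']
      exact ENNReal.mul_iInf' (fun h => absurd h ENNReal.ofReal_ne_top)
        (fun h => absurd h (ENNReal.ofReal_pos.2 hs).ne')
    rw [hdistrib]
    exact le_iInf fun r => claim r r.2
  · -- Δhat s ≤ Δ s
    rw [hΔ, hΔhat, hD, hDhat]
    refine mul_le_mul_right (sInf_le_sInf ?_) _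
    rintro r ⟨u, v, huM, hvM, _, hsuv, hr⟩
    exact ⟨u, v, huM, hvM, hsuv, hr⟩
end

section
/- Let f be smooth on ℝ with f'(0) = 0, f^{(j)}(0) = 0 for j = 2,…,m, f^{(m+1)}(0) > 0 for some even integer m ≥ 2, and f''(u)·u > 0 for all u ≠ 0. Then for every M > 0 there exists κ ∈ (0,1) such that for all u ∈ [-M, M]: f'(u) - f'(u/2) ≥ κ·f'(u) and f'(u/2) ≥ κ·f'(u). -/
open Set Filter Topology

lemma aux_lhop (k : ℕ) :
    ∀ (h : ℝ → ℝ), ContDiff ℝ ((⊤:ℕ∞):WithTop ℕ∞) h → (∀ j, j < k → iteratedDeriv j h 0 = 0) →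
    Tendsto (fun u => h u / u ^ k) (𝓝[≠] (0:ℝ))
      (𝓝 (iteratedDeriv k h 0 / k.factorial)) := by
  induction k with
  | zero =>
    intro h hh _
    simpa [iteratedDeriv_zero] using (hh.continuous.tendsto 0).mono_left nhdsWithin_le_nhds
  | succ k ih =>
    intro h hh hz
    have hd : ContDiff ℝ ((⊤:ℕ∞):WithTop ℕ∞) (deriv h) := (contDiff_infty_iff_deriv.mp hh).2
    have ih' := ih (deriv h) hd (fun j hj => by
      rw [← iteratedDeriv_succ']
      exact hz (j + 1) (by omega))
    have hdiv : Tendsto (fun u => deriv h u / deriv (fun x : ℝ => x ^ (k+1)) u) (𝓝[≠] (0:ℝ))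
        (𝓝 (iteratedDeriv (k+1) h 0 / (k+1).factorial)) := by
      have heq : ∀ᶠ u in 𝓝[≠] (0:ℝ),
          (deriv h u / u ^ k) / ((k:ℝ) + 1) = deriv h u / deriv (fun x : ℝ => x ^ (k+1)) u := by
        filter_upwards [self_mem_nhdsWithin] with u hu
        have hu' : (u:ℝ) ≠ 0 := hu
        rw [deriv_pow_field, div_div]
        push_cast
        ring_nf
      have key := (ih'.div_const ((k:ℝ) + 1)).congr' heq
      have hval : iteratedDeriv k (deriv h) 0 / (k.factorial : ℝ) / ((k:ℝ) + 1)
          = iteratedDeriv (k+1) h 0 / ((k+1).factorial : ℝ) := by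
        rw [← iteratedDeriv_succ', Nat.factorial_succ, div_div]
        push_cast
        rw [mul_comm]
      rwa [hval] at key
    exact deriv.lhopital_zero_nhdsNE
      (Eventually.of_forall fun x => (hh.differentiable (by simp)).differentiableAt)
      (by
        filter_upwards [self_mem_nhdsWithin] with u hu
        have hu' : (u:ℝ) ≠ 0 := hu
        rw [deriv_pow_field]
        positivity)
      (by
        have : Tendsto h (𝓝[≠] (0:ℝ)) (𝓝 (h 0)) :=
          (hh.continuous.tendsto 0).mono_left nhdsWithin_le_nhds
        have h00 : h 0 = 0 := by simpa [iteratedDeriv_zero] using hz 0 (by omega)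
        rwa [h00] at this)
      (by
        have : Tendsto (fun u : ℝ => u ^ (k+1)) (𝓝[≠] (0:ℝ)) (𝓝 ((0:ℝ) ^ (k+1))) :=
          ((continuous_pow (k+1)).tendsto 0).mono_left nhdsWithin_le_nhds
        simpa using this)
      hdiv

theorem stmt_5 (f : ℝ → ℝ) (hf : ContDiff ℝ (⊤ : ℕ∞) f)
    (m : ℕ) (hm : 2 ≤ m) (hmeven : Even m)
    (h0 : deriv f 0 = 0)
    (hj : ∀ j : ℕ, 2 ≤ j → j ≤ m → iteratedDeriv j f 0 = 0)
    (hm1 : 0 < iteratedDeriv (m + 1) f 0)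
    (hsign : ∀ u : ℝ, u ≠ 0 → 0 < deriv (deriv f) u * u) :
    ∀ M : ℝ, 0 < M → ∃ κ : ℝ, κ ∈ Set.Ioo (0 : ℝ) 1 ∧
      ∀ u ∈ Set.Icc (-M) M,
        κ * deriv f u ≤ deriv f u - deriv f (u / 2) ∧
        κ * deriv f u ≤ deriv f (u / 2) := by
  intro M hM
  set g : ℝ → ℝ := deriv f with hg
  have hgc : Continuous g := hf.continuous_deriv (by simp)
  have hf' : ContDiff ℝ ((⊤:ℕ∞):WithTop ℕ∞) f := hf.of_le (by simp)
  have hgsmooth : ContDiff ℝ ((⊤:ℕ∞):WithTop ℕ∞) g := (contDiff_infty_iff_deriv.mp hf').2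
  -- monotonicity of g
  have hmono : StrictMonoOn g (Ici 0) := by
    apply strictMonoOn_of_deriv_pos (convex_Ici 0) hgc.continuousOn
    intro x hx
    rw [interior_Ici] at hx
    have hx' : (0:ℝ) < x := hx
    have := hsign x (ne_of_gt hx')
    nlinarith
  have hanti : StrictAntiOn g (Iic 0) := by
    apply strictAntiOn_of_deriv_neg (convex_Iic 0) hgc.continuousOn
    intro x hx
    rw [interior_Iic] at hx
    have hx' : x < (0:ℝ) := hx
    have := hsign x (ne_of_lt hx')
    nlinarith
  have hgpos : ∀ u : ℝ, u ≠ 0 → 0 < g u := by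
    intro u hu
    rcases hu.lt_or_gt with h | h
    · have := hanti (Set.mem_Iic.mpr (le_of_lt h)) (Set.mem_Iic.mpr le_rfl) h
      rwa [h0] at this
    · have := hmono (Set.mem_Ici.mpr le_rfl) (Set.mem_Ici.mpr (le_of_lt h)) h
      rwa [h0] at this
  have ghalf_lt : ∀ u : ℝ, u ≠ 0 → g (u / 2) < g u := by
    intro u hu
    rcases hu.lt_or_gt with h | h
    · exact hanti (Set.mem_Iic.mpr (by linarith)) (Set.mem_Iic.mpr (by linarith)) (by linarith)
    · exact hmono (Set.mem_Ici.mpr (by linarith)) (Set.mem_Ici.mpr (by linarith)) (by linarith)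
  -- vanishing derivatives of g
  have hz : ∀ j, j < m → iteratedDeriv j g 0 = 0 := by
    intro j hjm
    match j with
    | 0 => simpa [iteratedDeriv_zero] using h0
    | (n+1) =>
      rw [hg, ← iteratedDeriv_succ']
      exact hj (n + 2) (by omega) (by omega)
  have hcm : (0:ℝ) < iteratedDeriv m g 0 / m.factorial := by
    have hm1' : 0 < iteratedDeriv m g 0 := by
      rw [hg, ← iteratedDeriv_succ']; exact hm1
    positivity
  set c : ℝ := iteratedDeriv m g 0 / m.factorial with hc
  have hlim : Tendsto (fun u => g u / u ^ m) (𝓝[≠] (0:ℝ)) (𝓝 c) :=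
    aux_lhop m g hgsmooth hz
  -- limit of φ := g(u/2)/g(u)
  have hhalfmap : Tendsto (fun u : ℝ => u / 2) (𝓝[≠] (0:ℝ)) (𝓝[≠] (0:ℝ)) := by
    apply tendsto_nhdsWithin_of_tendsto_nhds_of_eventually_within
    · have h2 : Tendsto (fun u : ℝ => u / 2) (𝓝 (0:ℝ)) (𝓝 ((0:ℝ) / 2)) :=
        Filter.Tendsto.div_const tendsto_id 2
      simpa using h2.mono_left nhdsWithin_le_nhds
    · filter_upwards [self_mem_nhdsWithin] with u hu
      have : (u:ℝ) ≠ 0 := hu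
      simp [this]
  have hlim2 : Tendsto (fun u : ℝ => g (u/2) / (u/2) ^ m) (𝓝[≠] (0:ℝ)) (𝓝 c) :=
    hlim.comp hhalfmap
  set t : ℝ := (1/2 : ℝ) ^ m with ht
  have htpos : 0 < t := by positivity
  have htlt : t < 1 := by
    apply pow_lt_one₀ (by norm_num) (by norm_num)
    omega
  set φ : ℝ → ℝ := fun u => g (u/2) / g u with hφ
  have hφlim : Tendsto φ (𝓝[≠] (0:ℝ)) (𝓝 t) := by
    have key : Tendsto (fun u : ℝ => (g (u/2) / (u/2) ^ m) / (g u / u ^ m) * t)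
        (𝓝[≠] (0:ℝ)) (𝓝 (c / c * t)) := ((hlim2.div hlim hcm.ne').mul_const t)
    rw [div_self hcm.ne', one_mul] at key
    apply key.congr'
    filter_upwards [self_mem_nhdsWithin] with u hu
    have hu' : (u:ℝ) ≠ 0 := hu
    have hgu : g u ≠ 0 := (hgpos u hu').ne'
    have hu2 : u / 2 ≠ 0 := by simp [hu']
    simp only [hφ, ht]
    field_simp
    ring
  -- small-u regime
  set ε : ℝ := min t (1 - t) / 2 with hε
  have hεpos : 0 < ε := by
    have := lt_min htpos (by linarith : (0:ℝ) < 1 - t)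
    positivity
  have hεt : ε ≤ t / 2 := by
    have : min t (1-t) ≤ t := min_le_left _ _
    simp only [hε]; linarith
  have hεt1 : t + ε < 1 := by
    have : min t (1-t) ≤ 1 - t := min_le_right _ _
    simp only [hε]; linarith
  have hev : ∀ᶠ u in 𝓝[≠] (0:ℝ), |φ u - t| < ε := by
    have := hφlim (Metric.ball_mem_nhds t hεpos)
    filter_upwards [this] with u hu
    simpa [Real.dist_eq] using hu
  have hev' : {u : ℝ | |φ u - t| < ε} ∈ 𝓝[≠] (0:ℝ) := hev
  rw [Metric.mem_nhdsWithin_iff] at hev'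
  obtain ⟨δ, hδpos, hsub⟩ := hev'
  have hδ : ∀ u : ℝ, u ≠ 0 → |u| < δ → |φ u - t| < ε := by
    intro u hu0 hud
    exact hsub ⟨by simpa [Real.dist_eq] using hud, hu0⟩
  set r : ℝ := min (δ / 2) (M / 2) with hr
  have hrpos : 0 < r := by positivity
  have hrδ : r < δ := lt_of_le_of_lt (min_le_left _ _) (by linarith)
  have hrM : r < M := lt_of_le_of_lt (min_le_right _ _) (by linarith)
  -- compact part
  set K : Set ℝ := Icc (-M) M ∩ {u | r ≤ |u|} with hK
  have hKne : (M:ℝ) ∈ K := by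
    constructor
    · exact ⟨by linarith, le_refl M⟩
    · simp only [Set.mem_setOf_eq, abs_of_pos hM]; linarith
  have hKcpt : IsCompact K :=
    (isCompact_Icc).inter_right (isClosed_le continuous_const continuous_abs)
  have hKne0 : ∀ u ∈ K, u ≠ 0 := by
    intro u hu h0u
    have := hu.2
    rw [h0u] at this
    simp at this
    linarith
  have hφcont : ContinuousOn φ K := by
    apply ContinuousOn.div
    · exact (hgc.comp (continuous_id.div_const 2)).continuousOn
    · exact hgc.continuousOn
    · intro u hu; exact (hgpos u (hKne0 u hu)).ne'
  obtain ⟨xmin, hxmin, hxminle⟩ := hKcpt.exists_isMinOn ⟨M, hKne⟩ hφcont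
  obtain ⟨xmax, hxmax, hxmaxge⟩ := hKcpt.exists_isMaxOn ⟨M, hKne⟩ hφcont
  have hφpos : ∀ u : ℝ, u ≠ 0 → 0 < φ u := fun u hu =>
    div_pos (hgpos _ (by simp [hu])) (hgpos u hu)
  have hφlt1 : ∀ u : ℝ, u ≠ 0 → φ u < 1 :=
    fun u hu => (div_lt_one (hgpos u hu)).mpr (ghalf_lt u hu)
  set a : ℝ := min (φ xmin) (t - ε) with ha
  set b : ℝ := max (φ xmax) (t + ε) with hb
  have hapos : 0 < a := lt_min (hφpos _ (hKne0 _ hxmin)) (by linarith)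
  have hblt1 : b < 1 := max_lt (hφlt1 _ (hKne0 _ hxmax)) hεt1
  have hbpos : 0 < b := lt_of_lt_of_le (by linarith : (0:ℝ) < t + ε) (le_max_right _ _)
  set κ : ℝ := min a (1 - b) with hκ
  have hκpos : 0 < κ := lt_min hapos (by linarith)
  have hκlt1 : κ < 1 := lt_of_le_of_lt (min_le_right _ _) (by linarith)
  refine ⟨κ, ⟨hκpos, hκlt1⟩, ?_⟩
  intro u hu
  rcases eq_or_ne u 0 with rfl | hu0
  · norm_num [h0]
  · -- key bounds on φ u
    have hbnd : κ ≤ φ u ∧ φ u ≤ b := by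
      rcases le_or_gt r |u| with hcase | hcase
      · have huK : u ∈ K := ⟨hu, hcase⟩
        exact ⟨le_trans (le_trans (min_le_left _ _) (min_le_left _ _)) (hxminle huK),
          le_trans (hxmaxge huK) (le_max_left _ _)⟩
      · have := hδ u hu0 (by linarith)
        have habs := abs_lt.mp this
        constructor
        · have : t - ε ≤ φ u := by linarith [habs.1]
          exact le_trans (le_trans (min_le_left _ _) (min_le_right _ _)) this
        · exact le_trans (by linarith [habs.2]) (le_max_right _ _)
    have hgu : 0 < g u := hgpos u hu0
    have h1 : κ * g u ≤ φ u * g u := by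
      apply mul_le_mul_of_nonneg_right hbnd.1 hgu.le
    have hφgu : φ u * g u = g (u/2) := by
      simp only [hφ]
      field_simp
    rw [hφgu] at h1
    have h2 : κ * g u ≤ (1 - φ u) * g u := by
      apply mul_le_mul_of_nonneg_right ?_ hgu.le
      have : κ ≤ 1 - b := min_le_right _ _
      linarith [hbnd.2]
    have h1b : (1 - φ u) * g u = g u - g (u/2) := by
      rw [sub_mul, one_mul, hφgu]
    rw [h1b] at h2
    exact ⟨h2, h1⟩
end

section
/- Let f be smooth on ℝ with f'(0) = 0, f^{(j)}(0) = 0 for j = 2,…,m, f^{(m+1)}(0) > 0 (m ≥ 2 even), and f''(u)·u > 0 for u ≠ 0. Let M > 0 and let κ ∈ (0,1) be such that f'(u) - f'(u/2) ≥ κ f'(u) and f'(u/2) ≥ κ f'(u) for all u ∈ [-M, M]. Then for all u ∈ [-M,M] \ {0}: |(f(u) - f(0))/(u · f'(u))| ≤ 1 - κ/2 < 1. -/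
open Set

private lemma aux_mvt (f : ℝ → ℝ) (hf : Differentiable ℝ f) (a b C : ℝ) (hab : a ≤ b)
    (h : ∀ x ∈ Set.Icc a b, deriv f x ≤ C) : f b - f a ≤ C * (b - a) := by
  have hmono : MonotoneOn (fun x => C * x - f x) (Set.Icc a b) := by
    apply monotoneOn_of_deriv_nonneg (convex_Icc a b)
    · exact (continuous_const.mul continuous_id).sub hf.continuous |>.continuousOn
    · exact ((differentiable_const _ |>.mul differentiable_id).sub hf).differentiableOn
    · intro x hx
      rw [interior_Icc] at hx
      have hd : HasDerivAt (fun x => C * x - f x) (C * 1 - deriv f x) x :=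
        ((hasDerivAt_id x).const_mul C).sub (hf x).hasDerivAt
      rw [hd.deriv]
      have := h x ⟨le_of_lt hx.1, le_of_lt hx.2⟩
      linarith
  have := hmono (Set.left_mem_Icc.2 hab) (Set.right_mem_Icc.2 hab) hab
  simp only at this
  linarith

theorem stmt_6 (f : ℝ → ℝ) (hf : ContDiff ℝ (⊤ : ℕ∞) f)
    (m : ℕ) (hm : 2 ≤ m) (hmeven : Even m)
    (h0 : deriv f 0 = 0)
    (hj : ∀ j : ℕ, 2 ≤ j → j ≤ m → iteratedDeriv j f 0 = 0)
    (hm1 : 0 < iteratedDeriv (m + 1) f 0)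
    (hsign : ∀ u : ℝ, u ≠ 0 → 0 < deriv (deriv f) u * u)
    (M : ℝ) (hM : 0 < M)
    (κ : ℝ) (hκ : κ ∈ Set.Ioo (0 : ℝ) 1)
    (hκ1 : ∀ u ∈ Set.Icc (-M) M, κ * deriv f u ≤ deriv f u - deriv f (u / 2))
    (hκ2 : ∀ u ∈ Set.Icc (-M) M, κ * deriv f u ≤ deriv f (u / 2)) :
    ∀ u ∈ Set.Icc (-M) M, u ≠ 0 →
      |(f u - f 0) / (u * deriv f u)| ≤ 1 - κ / 2 ∧ 1 - κ / 2 < 1 := by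
  obtain ⟨hκ0, hκlt⟩ := hκ
  have hfd : Differentiable ℝ f := hf.differentiable (by simp)
  have hgd : Differentiable ℝ (deriv f) :=
    ((contDiff_infty_iff_deriv.mp (hf.of_le (by simp))).2).differentiable (by simp)
  -- deriv f is strictly monotone on [0,∞) and strictly antitone on (-∞,0]
  have hmonop : StrictMonoOn (deriv f) (Set.Ici 0) := by
    apply strictMonoOn_of_deriv_pos (convex_Ici 0) hgd.continuous.continuousOn
    intro x hx
    rw [interior_Ici, Set.mem_Ioi] at hx
    have := hsign x (ne_of_gt hx)
    nlinarith
  have hmonon : StrictAntiOn (deriv f) (Set.Iic 0) := by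
    apply strictAntiOn_of_deriv_neg (convex_Iic 0) hgd.continuous.continuousOn
    intro x hx
    rw [interior_Iic, Set.mem_Iio] at hx
    have := hsign x (ne_of_lt hx)
    nlinarith
  -- deriv f > 0 off 0
  have hgpos : ∀ u : ℝ, u ≠ 0 → 0 < deriv f u := by
    intro u hu
    rcases lt_or_gt_of_ne hu with h | h
    · have := hmonon (Set.mem_Iic.2 (le_of_lt h)) (Set.mem_Iic.2 le_rfl) h
      rw [h0] at this; linarith
    · have := hmonop (Set.mem_Ici.2 le_rfl) (Set.mem_Ici.2 (le_of_lt h)) h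
      rw [h0] at this; linarith
  intro u hu hune
  refine ⟨?_, by linarith⟩
  have hgu : 0 < deriv f u := hgpos u hune
  have hgu2 : deriv f (u / 2) ≤ (1 - κ) * deriv f u := by
    have := hκ1 u hu
    linarith
  rcases lt_or_gt_of_ne hune with hneg | hpos
  · -- u < 0
    have h1 : f (u / 2) - f u ≤ deriv f u * (u / 2 - u) := by
      apply aux_mvt f hfd u (u / 2) _ (by linarith)
      intro x hx
      rcases eq_or_lt_of_le hx.1 with heq | hlt
      · rw [← heq]
      · have hx0 : x ≤ 0 := by have := hx.2; linarith
        exact le_of_lt (hmonon (Set.mem_Iic.2 (le_of_lt hneg)) (Set.mem_Iic.2 hx0) hlt)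
    have h2 : f 0 - f (u / 2) ≤ deriv f (u / 2) * (0 - u / 2) := by
      apply aux_mvt f hfd (u / 2) 0 _ (by linarith)
      intro x hx
      rcases eq_or_lt_of_le hx.1 with heq | hlt
      · rw [← heq]
      · exact le_of_lt (hmonon (Set.mem_Iic.2 (by linarith : u / 2 ≤ (0:ℝ))) (Set.mem_Iic.2 hx.2) hlt)
    have hnum : f 0 - f u ≤ (1 - κ / 2) * (-u * deriv f u) := by nlinarith
    have hnn : 0 ≤ f 0 - f u := by
      have : f u ≤ f 0 := by
        have := aux_mvt (fun x => -f x) (hfd.neg) u 0 0 (le_of_lt hneg) ?_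
        · simpa using this
        · intro x hx
          rw [deriv.fun_neg]
          rcases eq_or_lt_of_le hx.2 with heq | hlt
          · rw [heq, h0]; simp
          · have := hgpos x (ne_of_lt hlt); linarith
      linarith
    have hden : 0 < -u * deriv f u := by nlinarith
    rw [abs_div, abs_of_nonpos (by linarith : f u - f 0 ≤ 0),
        abs_of_neg (by nlinarith : u * deriv f u < 0)]
    rw [div_le_iff₀ (by linarith)]
    nlinarith
  · -- u > 0
    have h1 : f (u / 2) - f 0 ≤ deriv f (u / 2) * (u / 2 - 0) := by
      apply aux_mvt f hfd 0 (u / 2) _ (by linarith)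
      intro x hx
      rcases eq_or_lt_of_le hx.2 with heq | hlt
      · rw [heq]
      · exact le_of_lt (hmonop (Set.mem_Ici.2 hx.1) (Set.mem_Ici.2 (by linarith : (0:ℝ) ≤ u / 2)) hlt)
    have h2 : f u - f (u / 2) ≤ deriv f u * (u - u / 2) := by
      apply aux_mvt f hfd (u / 2) u _ (by linarith)
      intro x hx
      rcases eq_or_lt_of_le hx.2 with heq | hlt
      · rw [heq]
      · have hx0 : (0:ℝ) ≤ x := le_trans (by linarith) hx.1
        exact le_of_lt (hmonop (Set.mem_Ici.2 hx0) (Set.mem_Ici.2 (le_of_lt hpos)) hlt)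
    have hnum : f u - f 0 ≤ (1 - κ / 2) * (u * deriv f u) := by nlinarith
    have hnn : 0 ≤ f u - f 0 := by
      have := aux_mvt (fun x => -f x) (hfd.neg) 0 u 0 (le_of_lt hpos) ?_
      · simp at this; linarith
      · intro x hx
        rw [deriv.fun_neg]
        rcases eq_or_lt_of_le hx.1 with heq | hlt
        · rw [← heq, h0]; simp
        · have := hgpos x (ne_of_gt hlt); linarith
    have hden : 0 < u * deriv f u := by positivity
    rw [abs_div, abs_of_nonneg hnn, abs_of_pos hden, div_le_iff₀ hden]
    nlinarith
end

section
/- Let a < b and V, L > 0 with 2L = b - a. Consider the family F of all g: ℝ → [-V, V] with support in [a, b] and total variation TV(g) ≤ 2V. Then for every ε with 0 < ε ≤ VL/3, the Kolmogorov ε-entropy of F in L¹(ℝ) satisfies H_ε(F | L¹(ℝ)) ≤ 48·V·L/ε, i.e. F can be covered by at most 2^{48VL/ε} sets of L¹-diameter at most 2ε. -/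
/-!
Sample each function at the `m ≈ 8VL/ε` points of a uniform grid on `[a, b]`, round the samples
to multiples of `δ = ε / (2L)`, and put two functions in the same cell when their rounded samples
agree. On a grid interval two such functions differ by at most their variations there plus `δ`,
so a cell has `L¹`-diameter at most `(2L/m) · 4V + 2Lδ ≤ 2ε`.

For the count, prepend the sample `0` taken at a point left of `a`. The increments `dⱼ` of the
rounded samples then satisfy `∑ (2|dⱼ| + 1) ≤ 2 · TV / δ + 3m ≤ 32VL/ε + 3`, and writing `dⱼ` as a
block of length `intEquivNat dⱼ + 1 ≤ 2|dⱼ| + 1` maps such sequences injectively to compositions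
of `M + 1`, of which there are `2 ^ M`.
-/

open Set MeasureTheory

theorem Equiv.intEquivNat_le_two_mul_natAbs (z : ℤ) : Equiv.intEquivNat z ≤ 2 * z.natAbs := by
  rcases z with n | n
  · exact le_of_eq rfl
  · change 2 * n + 1 ≤ 2 * (n + 1)
    omega

def compositionOfSumLe {m M : ℕ} (e : Fin m → ℕ) (he : ∑ j, (e j + 1) ≤ M) :
    Composition (M + 1) where
  blocks := List.ofFn (fun j => e j + 1) ++ [M + 1 - ∑ j, (e j + 1)]
  blocks_pos := by
    intro i hi
    simp only [List.mem_append, List.mem_ofFn, List.mem_singleton] at hi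
    omega
  blocks_sum := by
    simp only [List.sum_append, List.sum_ofFn, List.sum_singleton]
    omega

theorem compositionOfSumLe_injective {m M : ℕ} {e e' : Fin m → ℕ} (he : ∑ j, (e j + 1) ≤ M)
    (he' : ∑ j, (e' j + 1) ≤ M) (h : compositionOfSumLe e he = compositionOfSumLe e' he') :
    e = e' := by
  have := congrArg Composition.blocks h
  simp only [compositionOfSumLe] at this
  have := (List.append_inj this (by simp)).1
  funext j
  simpa using congrFun (List.ofFn_injective this) j

theorem encard_setOf_sum_add_one_le (m M : ℕ) :
    {e : Fin m → ℕ | ∑ j, (e j + 1) ≤ M}.encard ≤ 2 ^ M := by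
  have hinj : Function.Injective
      (fun e : {e : Fin m → ℕ | ∑ j, (e j + 1) ≤ M} => compositionOfSumLe e.1 e.2) :=
    fun e e' h => Subtype.ext (compositionOfSumLe_injective e.2 e'.2 h)
  calc _ ≤ ENat.card (Composition (M + 1)) := ENat.card_le_card_of_injective hinj
    _ = 2 ^ M := by simp [composition_card]

def incrementBoundedSeqs (m M : ℕ) : Set (Fin (m + 1) → ℤ) :=
  {s | s 0 = 0 ∧ ∑ j : Fin m, (2 * (s j.succ - s j.castSucc).natAbs + 1) ≤ M}

theorem encard_incrementBoundedSeqs_le (m M : ℕ) :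
    (incrementBoundedSeqs m M).encard ≤ 2 ^ M := by
  let Δ : (Fin (m + 1) → ℤ) → Fin m → ℕ := fun s j => Equiv.intEquivNat (s j.succ - s j.castSucc)
  refine le_trans (encard_le_encard_of_injOn (f := Δ) ?_ ?_) (encard_setOf_sum_add_one_le m M)
  · rintro s ⟨-, hs⟩
    refine le_trans (Finset.sum_le_sum fun j _ => ?_) hs
    have := Equiv.intEquivNat_le_two_mul_natAbs (s j.succ - s j.castSucc)
    simp only [Δ]
    omega
  · rintro s ⟨hs0, -⟩ s' ⟨hs0', -⟩ h
    funext j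
    induction j using Fin.induction with
    | zero => rw [hs0, hs0']
    | succ j ih =>
      have := Equiv.intEquivNat.injective (congrFun h j)
      omega

theorem exists_fin_cover_of_encard_image_le {α β : Type*} (F : Set α) (c : α → β) {N : ℕ}
    (hN : (c '' F).encard ≤ N) :
    ∃ n ≤ N, ∃ C : Fin n → Set α, F ⊆ ⋃ i, C i ∧
      ∀ i, ∀ g ∈ C i, ∀ h ∈ C i, g ∈ F ∧ h ∈ F ∧ c g = c h := by
  obtain ⟨hfin, hcard⟩ := encard_le_coe_iff_finite_ncard_le.1 hN
  have := hfin.to_subtype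
  let e := Finite.equivFin (c '' F)
  refine ⟨_, hcard, fun i => F ∩ c ⁻¹' {(e.symm i : β)}, fun g hg => ?_, ?_⟩
  · refine mem_iUnion.2 ⟨e ⟨c g, mem_image_of_mem c hg⟩, hg, ?_⟩
    rw [Equiv.symm_apply_apply]
    rfl
  · rintro i g ⟨hg, hgi⟩ h ⟨hh, hhi⟩
    exact ⟨hg, hh, hgi.trans hhi.symm⟩

theorem eVariationOn_sub_le {α E : Type*} [LinearOrder α] [SeminormedAddCommGroup E]
    (f g : α → E) (s : Set α) :
    eVariationOn (f - g) s ≤ eVariationOn f s + eVariationOn g s := by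
  refine iSup_le fun ⟨n, u, hu, us⟩ => ?_
  calc ∑ i ∈ Finset.range n, edist ((f - g) (u (i + 1))) ((f - g) (u i))
      ≤ ∑ i ∈ Finset.range n,
          (edist (f (u (i + 1))) (f (u i)) + edist (g (u (i + 1))) (g (u i))) := by
        refine Finset.sum_le_sum fun i _ => ?_
        simpa only [Pi.sub_apply, sub_eq_add_neg, edist_neg_neg] using
          edist_add_add_le (f (u (i + 1))) (-g (u (i + 1))) (f (u i)) (-g (u i))
    _ = _ := Finset.sum_add_distrib
    _ ≤ _ := add_le_add (eVariationOn.sum_le hu us) (eVariationOn.sum_le hu us)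

theorem BoundedVariationOn.sum_dist_le {α E : Type*} [LinearOrder α] [PseudoMetricSpace E]
    {f : α → E} {s : Set α} (hf : BoundedVariationOn f s) {u : ℕ → α} (hu : Monotone u)
    (us : ∀ i, u i ∈ s) (n : ℕ) :
    ∑ i ∈ Finset.range n, dist (f (u (i + 1))) (f (u i)) ≤ (eVariationOn f s).toReal := by
  rw [← ENNReal.ofReal_le_ofReal_iff ENNReal.toReal_nonneg, ENNReal.ofReal_toReal hf,
    ENNReal.ofReal_sum_of_nonneg fun _ _ => dist_nonneg]
  simpa only [← edist_dist] using eVariationOn.sum_le (f := f) (n := n) hu us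

theorem BoundedVariationOn.intervalIntegrable {f : ℝ → ℝ} {a b : ℝ}
    (hf : BoundedVariationOn f (uIcc a b)) : IntervalIntegrable f volume a b := by
  obtain ⟨p, q, hp, hq, rfl⟩ := hf.locallyBoundedVariationOn.exists_monotoneOn_sub_monotoneOn
  exact hp.intervalIntegrable.sub hq.intervalIntegrable

theorem intervalIntegral_abs_le_of_abs_le_on_grid {f : ℝ → ℝ} {x : ℕ → ℝ} {m : ℕ} {w δ : ℝ}
    (hw : 0 ≤ w) (hx : ∀ j, x (j + 1) = x j + w)
    (hf : BoundedVariationOn f (Icc (x 0) (x m))) (hgrid : ∀ j < m, |f (x j)| ≤ δ) :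
    ∫ y in x 0..x m, |f y| ≤ w * (eVariationOn f (Icc (x 0) (x m))).toReal + m * w * δ := by
  have hmono : Monotone x := monotone_nat_of_le_succ fun j => by rw [hx]; linarith
  have hle : ∀ j, x j ≤ x (j + 1) := fun j => hmono j.le_succ
  have hbv : ∀ j < m, BoundedVariationOn f (Icc (x j) (x (j + 1))) := fun j hj =>
    hf.mono (Icc_subset_Icc (hmono j.zero_le) (hmono hj))
  have hpiece : ∀ j < m, ∫ y in x j..x (j + 1), |f y|
      ≤ w * ((eVariationOn f (Icc (x j) (x (j + 1)))).toReal + δ) := by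
    intro j hj
    have hbound : ∀ y ∈ uIoc (x j) (x (j + 1)),
        ‖|f y|‖ ≤ (eVariationOn f (Icc (x j) (x (j + 1)))).toReal + δ := by
      intro y hy
      have hy : y ∈ Icc (x j) (x (j + 1)) := uIcc_of_le (hle j) ▸ uIoc_subset_uIcc hy
      rw [Real.norm_eq_abs, abs_abs]
      calc |f y| ≤ dist (f y) (f (x j)) + |f (x j)| := by
            rw [Real.dist_eq]; linarith [abs_sub_abs_le_abs_sub (f y) (f (x j))]
        _ ≤ _ := add_le_add ((hbv j hj).dist_le hy (left_mem_Icc.2 (hle j))) (hgrid j hj)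
    calc _ ≤ ‖∫ y in x j..x (j + 1), |f y|‖ := Real.le_norm_self _
      _ ≤ _ * |x (j + 1) - x j| := intervalIntegral.norm_integral_le_of_norm_le_const hbound
      _ = _ := by rw [hx, add_sub_cancel_left, abs_of_nonneg hw, mul_comm]
  have hvar : ∑ j ∈ Finset.range m, (eVariationOn f (Icc (x j) (x (j + 1)))).toReal
      = (eVariationOn f (Icc (x 0) (x m))).toReal := by
    rw [← ENNReal.toReal_sum fun j hj => hbv j (Finset.mem_range.1 hj), eVariationOn.sum' f hmono]
  calc ∫ y in x 0..x m, |f y| = ∑ j ∈ Finset.range m, ∫ y in x j..x (j + 1), |f y| :=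
        (intervalIntegral.sum_integral_adjacent_intervals fun j hj =>
          (BoundedVariationOn.intervalIntegrable (uIcc_of_le (hle j) ▸ hbv j hj)).abs).symm
    _ ≤ ∑ j ∈ Finset.range m, w * ((eVariationOn f (Icc (x j) (x (j + 1)))).toReal + δ) :=
        Finset.sum_le_sum fun j hj => hpiece j (Finset.mem_range.1 hj)
    _ = _ := by
        rw [← Finset.mul_sum, Finset.sum_add_distrib, hvar, Finset.sum_const, Finset.card_range,
          nsmul_eq_mul]
        ring

theorem abs_sub_le_of_round_div_eq {x y δ : ℝ} (hδ : 0 < δ) (h : round (x / δ) = round (y / δ)) :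
    |x - y| ≤ δ := by
  have hx := abs_sub_round (x / δ)
  have hy := abs_sub_round (y / δ)
  rw [h] at hx
  have : |x / δ - y / δ| ≤ 1 := by
    calc _ ≤ |x / δ - round (y / δ)| + |round (y / δ) - y / δ| := abs_sub_le _ _ _
      _ ≤ 1 := by rw [abs_sub_comm] at hy; linarith
  rwa [← sub_div, abs_div, abs_of_pos hδ, div_le_one hδ] at this

theorem natAbs_round_sub_round_le (x y : ℝ) :
    ((round x - round y).natAbs : ℝ) ≤ |x - y| + 1 := by
  have hx := abs_sub_round x
  have hy := abs_sub_round y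
  rw [Nat.cast_natAbs, Int.cast_abs, Int.cast_sub]
  rw [abs_sub_comm] at hx
  calc |(round x : ℝ) - round y| = |(x - y) + (round x - x) + (y - round y)| := by ring_nf
    _ ≤ |x - y| + |round x - x| + |y - round y| := abs_add_three _ _ _
    _ ≤ |x - y| + 1 := by linarith

noncomputable def roundedSamples (δ : ℝ) (u : ℕ → ℝ) (m : ℕ) (f : ℝ → ℝ) : Fin (m + 1) → ℤ :=
  fun j => round (f (u j) / δ)

theorem sum_natAbs_roundedSamples_sub_le {δ : ℝ} {u : ℕ → ℝ} {m : ℕ} {f : ℝ → ℝ}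
    (hδ : 0 < δ) (hu : Monotone u) (hf : BoundedVariationOn f univ) :
    ((∑ j : Fin m, (2 * (roundedSamples δ u m f j.succ
        - roundedSamples δ u m f j.castSucc).natAbs + 1) : ℕ) : ℝ)
      ≤ 2 * (eVariationOn f univ).toReal / δ + 3 * m := by
  have hstep : ∀ j : ℕ,
      ((2 * (round (f (u (j + 1)) / δ) - round (f (u j) / δ)).natAbs + 1 : ℕ) : ℝ)
        ≤ 2 / δ * dist (f (u (j + 1))) (f (u j)) + 3 := by
    intro j
    have h := natAbs_round_sub_round_le (f (u (j + 1)) / δ) (f (u j) / δ)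
    rw [← sub_div, abs_div, abs_of_pos hδ] at h
    have h2 : 2 / δ * |f (u (j + 1)) - f (u j)| = 2 * (|f (u (j + 1)) - f (u j)| / δ) := by ring
    rw [Real.dist_eq, h2]
    push_cast
    linarith
  have hvar := hf.sum_dist_le hu (fun _ => mem_univ _) m
  calc _ = ∑ j ∈ Finset.range m,
        ((2 * (round (f (u (j + 1)) / δ) - round (f (u j) / δ)).natAbs + 1 : ℕ) : ℝ) := by
        simp only [roundedSamples, Fin.val_succ, Fin.val_castSucc, Nat.cast_sum]
        exact Fin.sum_univ_eq_sum_range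
          (fun j => ((2 * (round (f (u (j + 1)) / δ) - round (f (u j) / δ)).natAbs + 1 : ℕ) : ℝ)) m
    _ ≤ ∑ j ∈ Finset.range m, (2 / δ * dist (f (u (j + 1))) (f (u j)) + 3) :=
        Finset.sum_le_sum fun j _ => hstep j
    _ = 2 / δ * ∑ j ∈ Finset.range m, dist (f (u (j + 1))) (f (u j)) + 3 * m := by
        rw [Finset.sum_add_distrib, ← Finset.mul_sum]
        simp [mul_comm]
    _ ≤ 2 / δ * (eVariationOn f univ).toReal + 3 * m := by gcongr
    _ = _ := by ring

theorem roundedSamples_mem_incrementBoundedSeqs {δ : ℝ} {u : ℕ → ℝ} {m M : ℕ} {f : ℝ → ℝ}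
    (hδ : 0 < δ) (hu : Monotone u) (hf : BoundedVariationOn f univ) (hf0 : f (u 0) = 0)
    (hM : 2 * (eVariationOn f univ).toReal / δ + 3 * m ≤ M) :
    roundedSamples δ u m f ∈ incrementBoundedSeqs m M := by
  refine ⟨by simp [roundedSamples, hf0], ?_⟩
  exact_mod_cast (sum_natAbs_roundedSamples_sub_le hδ hu hf).trans hM

theorem integral_abs_sub_le_of_roundedSamples_eq {u : ℕ → ℝ} {a b w δ : ℝ} {m : ℕ}
    {g h : ℝ → ℝ} (hw : 0 ≤ w) (hδ : 0 < δ) (hu : ∀ j, u (j + 1) = u j + w)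
    (ha : u 1 = a) (hb : u (m + 1) = b)
    (hg : BoundedVariationOn g univ) (hh : BoundedVariationOn h univ)
    (hgs : ∀ x ∉ Icc a b, g x = 0) (hhs : ∀ x ∉ Icc a b, h x = 0)
    (hgh : roundedSamples δ u m g = roundedSamples δ u m h) :
    ∫ x, |g x - h x|
      ≤ w * ((eVariationOn g univ).toReal + (eVariationOn h univ).toReal) + m * w * δ := by
  have hab : a ≤ b := by
    rw [← ha, ← hb]
    exact (monotone_nat_of_le_succ fun j => by rw [hu]; linarith) (by omega : 1 ≤ m + 1)
  have hsupp : ∫ x, |g x - h x| = ∫ x in a..b, |(g - h) x| := by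
    rw [intervalIntegral.integral_of_le hab, ← integral_Icc_eq_integral_Ioc,
      setIntegral_eq_integral_of_forall_compl_eq_zero fun x hx => by simp [hgs x hx, hhs x hx]]
    rfl
  have hvar : eVariationOn (g - h) (Icc a b) ≤ eVariationOn g univ + eVariationOn h univ :=
    (eVariationOn.mono _ (subset_univ _)).trans (eVariationOn_sub_le g h univ)
  have hbv : BoundedVariationOn (g - h) (Icc a b) :=
    ne_top_of_le_ne_top (ENNReal.add_ne_top.2 ⟨hg, hh⟩) hvar
  have hgrid : ∀ j < m, |(g - h) (u (j + 1))| ≤ δ := fun j hj =>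
    abs_sub_le_of_round_div_eq hδ (congrFun hgh ⟨j + 1, by omega⟩)
  have key := intervalIntegral_abs_le_of_abs_le_on_grid (x := fun j => u (j + 1)) hw
    (fun j => hu (j + 1)) (ha ▸ hb ▸ hbv) hgrid
  simp only [zero_add, ha, hb] at key
  rw [hsupp]
  exact key.trans (by gcongr; exact ENNReal.toReal_le_add hvar hg hh)

def bvSupportedIn (a b T : ℝ) : Set (ℝ → ℝ) :=
  {g | (∀ x ∉ Icc a b, g x = 0) ∧ eVariationOn g univ ≤ ENNReal.ofReal T}

theorem exists_fin_cover_bvSupportedIn {a b T δ : ℝ} {m M : ℕ} (hab : a < b) (hm : 0 < m)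
    (hδ : 0 < δ) (hT : 0 ≤ T) (hM : 2 * T / δ + 3 * m ≤ M) :
    ∃ n ≤ 2 ^ M, ∃ C : Fin n → Set (ℝ → ℝ), bvSupportedIn a b T ⊆ ⋃ i, C i ∧
      ∀ i, ∀ g ∈ C i, ∀ h ∈ C i, ∫ x, |g x - h x| ≤ (b - a) / m * (2 * T) + (b - a) * δ := by
  set w := (b - a) / m
  have hw : 0 < w := div_pos (by linarith) (by exact_mod_cast hm)
  have hmw : m * w = b - a := mul_div_cancel₀ _ (by positivity)
  set u : ℕ → ℝ := fun j => a + (j - 1) * w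
  have hu : ∀ j, u (j + 1) = u j + w := fun j => by simp only [u]; push_cast; ring
  have hu0 : u 0 < a := by simp only [u]; push_cast; linarith
  have hvar : ∀ g ∈ bvSupportedIn a b T,
      BoundedVariationOn g univ ∧ (eVariationOn g univ).toReal ≤ T :=
    fun g hg => ⟨ne_top_of_le_ne_top ENNReal.ofReal_ne_top hg.2,
      ENNReal.toReal_le_of_le_ofReal hT hg.2⟩
  have hcodes : roundedSamples δ u m '' bvSupportedIn a b T ⊆ incrementBoundedSeqs m M := by
    rintro _ ⟨g, hg, rfl⟩
    refine roundedSamples_mem_incrementBoundedSeqs hδ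
      (monotone_nat_of_le_succ fun j => by rw [hu]; linarith) (hvar g hg).1
      (hg.1 _ fun h => (not_le.2 hu0) h.1) (le_trans ?_ hM)
    gcongr
    exact (hvar g hg).2
  obtain ⟨n, hn, C, hcover, hC⟩ := exists_fin_cover_of_encard_image_le _ (roundedSamples δ u m)
    ((encard_mono hcodes).trans (encard_incrementBoundedSeqs_le m M))
  refine ⟨n, hn, C, hcover, fun i g hg h hh => ?_⟩
  obtain ⟨hgF, hhF, hgh⟩ := hC i g hg h hh
  calc ∫ x, |g x - h x|
      ≤ w * ((eVariationOn g univ).toReal + (eVariationOn h univ).toReal) + m * w * δ :=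
        integral_abs_sub_le_of_roundedSamples_eq hw.le hδ hu (by simp [u])
          (by simp only [u]; push_cast; rw [add_sub_cancel_right, hmw]; ring)
          (hvar g hgF).1 (hvar h hhF).1 hgF.1 hhF.1 hgh
    _ ≤ w * (2 * T) + (b - a) * δ := by
        rw [hmw]; gcongr; linarith [(hvar g hgF).2, (hvar h hhF).2]

theorem stmt_17_general (a b V L ε : ℝ) (hV : 0 < V) (hL : 0 < L)
    (h2L : 2 * L = b - a) (hε : 0 < ε) (hεle : ε ≤ V * L / 3) :
    ∃ n : ℕ, (n : ℝ) ≤ (2 : ℝ) ^ (48 * V * L / ε) ∧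
      ∃ C : Fin n → Set (ℝ → ℝ),
        ({ g : ℝ → ℝ | (∀ x, |g x| ≤ V) ∧ (∀ x, x ∉ Set.Icc a b → g x = 0) ∧
            eVariationOn g Set.univ ≤ ENNReal.ofReal (2 * V) } ⊆ ⋃ i, C i) ∧
        ∀ i : Fin n, ∀ g ∈ C i, ∀ h ∈ C i, ∫ x, |g x - h x| ≤ 2 * ε := by
  set t := V * L / ε with ht
  have ht3 : 3 ≤ t := by rw [ht, le_div_iff₀ hε]; linarith
  set δ := ε / (2 * L)
  have hδ : 2 * L * δ = ε := by simp only [δ]; field_simp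
  have hVδ : 2 * (2 * V) / δ = 8 * t := by simp only [δ, ht]; field_simp; ring
  set m := ⌈8 * t⌉₊
  have hm : 8 * t ≤ m := Nat.le_ceil _
  have hm' : (m : ℝ) < 8 * t + 1 := Nat.ceil_lt_add_one (by positivity)
  have hm0 : (0 : ℝ) < m := by linarith
  set M := ⌈32 * t + 3⌉₊
  have hM : (M : ℝ) ≤ 48 * V * L / ε := by
    have := Nat.ceil_lt_add_one (show 0 ≤ 32 * t + 3 by positivity)
    rw [show 48 * V * L / ε = 48 * t by rw [ht]; ring]
    linarith
  obtain ⟨n, hn, C, hcover, hC⟩ := exists_fin_cover_bvSupportedIn (a := a) (b := b) (T := 2 * V)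
    (by linarith) (by exact_mod_cast hm0) (by positivity) (by positivity)
    (le_trans (by rw [hVδ]; linarith) (Nat.le_ceil (32 * t + 3)) : 2 * (2 * V) / δ + 3 * m ≤ M)
  refine ⟨n, ?_, C, fun g hg => hcover ⟨hg.2.1, hg.2.2⟩,
    fun i g hg h hh => (hC i g hg h hh).trans ?_⟩
  · calc (n : ℝ) ≤ 2 ^ M := by exact_mod_cast hn
      _ = 2 ^ (M : ℝ) := (Real.rpow_natCast 2 M).symm
      _ ≤ _ := Real.rpow_le_rpow_of_exponent_le one_le_two hM
  · have hw : 2 * L * (2 * (2 * V)) / m ≤ ε := by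
      rw [div_le_iff₀ hm0]
      have : 8 * t * ε = 8 * (V * L) := by rw [ht]; field_simp
      nlinarith
    rw [← h2L, div_mul_eq_mul_div]
    linarith

theorem stmt_17 (a b V L ε : ℝ) (hab : a < b) (hV : 0 < V) (hL : 0 < L)
    (h2L : 2 * L = b - a) (hε : 0 < ε) (hεle : ε ≤ V * L / 3) :
    ∃ n : ℕ, (n : ℝ) ≤ (2 : ℝ) ^ (48 * V * L / ε) ∧
      ∃ C : Fin n → Set (ℝ → ℝ),
        ({ g : ℝ → ℝ | (∀ x, |g x| ≤ V) ∧ (∀ x, x ∉ Set.Icc a b → g x = 0) ∧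
            eVariationOn g Set.univ ≤ ENNReal.ofReal (2 * V) } ⊆ ⋃ i, C i) ∧
        ∀ i : Fin n, ∀ g ∈ C i, ∀ h ∈ C i, ∫ x, |g x - h x| ≤ 2 * ε :=
  stmt_17_general a b V L ε hV hL h2L hε hεle
end
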